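/- Let G be a finite weighted graph with peeling sequence H_n ⊇ … ⊇ H_1. Then max_{1 ≤ i ≤ n} d(H_i) ≥ dmax(G)/2, where dmax(G) is the maximum density over all nonempty induced subgraphs of G. (Charikar's greedy algorithm is a 2-approximation for the densest subgraph problem.) -/

import Mathlib

open Finset

variable {V : Type*} [Fintype V] [DecidableEq V]

/-- Weighted degree of vertex `v` in the subgraph induced on `S`. -/
def wDeg (w : V → V → ℝ) (S : Finset V) (v : V) : ℝ := ∑ u ∈ S, w v u

/-- Total edge weight of the subgraph induced on `S`. -/
noncomputable def wTot (w : V → V → ℝ) (S : Finset V) : ℝ :=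
  (∑ u ∈ S, ∑ x ∈ S, w u x) / 2

/-- Density of the subgraph induced on `S`. -/
noncomputable def dens (w : V → V → ℝ) (S : Finset V) : ℝ := wTot w S / S.card

lemma sum_wDeg (w : V → V → ℝ) (S : Finset V) :
    ∑ u ∈ S, wDeg w S u = 2 * wTot w S := by
  simp only [wDeg, wTot]; ring

lemma wTot_erase (w : V → V → ℝ) (hsymm : ∀ u v, w u v = w v u) (hdiag : ∀ v, w v v = 0)
    {S : Finset V} {a : V} (ha : a ∈ S) :
    wTot w (S.erase a) = wTot w S - wDeg w S a := by
  have h1 : ∀ u, ∑ x ∈ S, w u x = w u a + ∑ x ∈ S.erase a, w u x := fun u =>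
    (Finset.add_sum_erase S (w u ·) ha).symm
  have h2 : (∑ u ∈ S, ∑ x ∈ S, w u x)
      = ∑ u ∈ S, w u a + ∑ u ∈ S, ∑ x ∈ S.erase a, w u x := by
    rw [← Finset.sum_add_distrib]; exact Finset.sum_congr rfl fun u _ => h1 u
  have h3 : ∑ u ∈ S, ∑ x ∈ S.erase a, w u x
      = (∑ x ∈ S.erase a, w a x) + ∑ u ∈ S.erase a, ∑ x ∈ S.erase a, w u x :=
    (Finset.add_sum_erase S (fun u => ∑ x ∈ S.erase a, w u x) ha).symm
  have h4 : ∑ u ∈ S, w u a = wDeg w S a := by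
    unfold wDeg; exact Finset.sum_congr rfl fun u _ => hsymm u a
  have h5 : ∑ x ∈ S.erase a, w a x = wDeg w S a := by
    unfold wDeg
    rw [← Finset.add_sum_erase S (w a ·) ha, hdiag, zero_add]
  unfold wTot
  rw [h2, h3, h4, h5]; ring

lemma dens_nonneg (w : V → V → ℝ) (hnn : ∀ u v, 0 ≤ w u v) (S : Finset V) :
    0 ≤ dens w S := by
  apply div_nonneg _ (Nat.cast_nonneg _)
  apply div_nonneg _ (by norm_num)
  exact Finset.sum_nonneg fun u _ => Finset.sum_nonneg fun x _ => hnn u x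

lemma wDeg_ge_dens (w : V → V → ℝ) (hsymm : ∀ u v, w u v = w v u)
    (hnn : ∀ u v, 0 ≤ w u v) (hdiag : ∀ v, w v v = 0)
    {S : Finset V} (hS : S.Nonempty)
    (hmax : ∀ T : Finset V, T.Nonempty → dens w T ≤ dens w S)
    {a : V} (ha : a ∈ S) : dens w S ≤ wDeg w S a := by
  rcases eq_or_lt_of_le (Finset.one_le_card.mpr hS) with h1 | h2
  · -- S = {a}
    have : S = {a} := by
      rcases Finset.card_eq_one.mp h1.symm with ⟨b, hb⟩
      rw [hb] at ha ⊢
      simp_all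
    subst this
    have : wTot w {a} = 0 := by simp [wTot, hdiag]
    simp only [_root_.dens, this, zero_div]
    exact Finset.sum_nonneg fun u _ => hnn a u
  · -- card S ≥ 2
    have hk : (2:ℕ) ≤ S.card := h2
    have hne : (S.erase a).Nonempty := by
      rw [← Finset.card_pos, Finset.card_erase_of_mem ha]; omega
    have hle := hmax _ hne
    simp only [_root_.dens] at hle
    rw [wTot_erase w hsymm hdiag ha, Finset.card_erase_of_mem ha] at hle
    set k : ℝ := (S.card : ℝ) with hkdef
    have hk2 : (2:ℝ) ≤ k := by rw [hkdef]; exact_mod_cast hk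
    have hcast : ((S.card - 1 : ℕ) : ℝ) = k - 1 := by
      have : 1 ≤ S.card := by omega
      push_cast [this]; ring
    rw [hcast] at hle
    have hk1 : (0:ℝ) < k - 1 := by linarith
    have hk0 : (0:ℝ) < k := by linarith
    rw [div_le_div_iff₀ hk1 hk0] at hle
    simp only [_root_.dens, ← hkdef]
    rw [div_le_iff₀ hk0]
    nlinarith [hle]

/-- Charikar's greedy algorithm is a 2-approximation for the
densest subgraph problem: some H_i has density ≥ dmax(G)/2. -/
theorem stmt8 (w : V → V → ℝ) (hsymm : ∀ u v, w u v = w v u)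
    (hnn : ∀ u v, 0 ≤ w u v) (hdiag : ∀ v, w v v = 0)
    (H : ℕ → Finset V) (v : ℕ → V) (r : ℕ → ℝ)
    (hHn : H (Fintype.card V) = Finset.univ)
    (hpeel : ∀ i, 1 ≤ i → i ≤ Fintype.card V →
      v i ∈ H i ∧ r i = wDeg w (H i) (v i) ∧
      (∀ u ∈ H i, r i ≤ wDeg w (H i) u) ∧ H (i - 1) = (H i).erase (v i)) :
    ∀ S : Finset V, S.Nonempty →
      ∃ i, 1 ≤ i ∧ i ≤ Fintype.card V ∧ dens w S / 2 ≤ dens w (H i) := by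
  classical
  intro S hS
  set n := Fintype.card V with hn
  -- cards
  have hcard : ∀ j, j ≤ n → (H (n - j)).card = n - j := by
    intro j
    induction j with
    | zero => intro _; simp [hHn]; exact hn.symm
    | succ j ih =>
      intro hj
      have hj' : j ≤ n := by omega
      have h1 : 1 ≤ n - j := by omega
      obtain ⟨hv, _, _, hHe⟩ := hpeel (n - j) h1 (by omega)
      have : n - (j+1) = (n - j) - 1 := by omega
      rw [this, hHe, Finset.card_erase_of_mem hv, ih hj']
  have hcard' : ∀ i, i ≤ n → (H i).card = i := by
    intro i hi
    have := hcard (n - i) (by omega)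
    rwa [Nat.sub_sub_self hi] at this
  -- maximizer
  obtain ⟨T, hTmem, hTmax⟩ := Finset.exists_max_image
    ((Finset.univ.powerset).filter (fun T => T.Nonempty)) (dens w)
    ⟨S, by simp [Finset.mem_filter, hS]⟩
  have hTne : T.Nonempty := (Finset.mem_filter.mp hTmem).2
  have hmax : ∀ T' : Finset V, T'.Nonempty → dens w T' ≤ dens w T := by
    intro T' hT'
    exact hTmax T' (by simp [Finset.mem_filter, hT'])
  have hST : dens w S ≤ dens w T := hmax S hS
  -- first time a vertex of T is peeled
  have hPn : T ⊆ H n := by rw [hHn]; exact Finset.subset_univ T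
  have hex : ∃ i, T ⊆ H i := ⟨n, hPn⟩
  set i := Nat.find hex with hidef
  have hiT : T ⊆ H i := Nat.find_spec hex
  have hin : i ≤ n := Nat.find_le hPn
  have hi1 : 1 ≤ i := by
    by_contra h
    have hi0 : i = 0 := by omega
    have : (H 0).card = 0 := hcard' 0 (by omega)
    obtain ⟨a, haT⟩ := hTne
    have : a ∈ H 0 := (hi0 ▸ hiT) haT
    simp [Finset.card_eq_zero.mp ‹(H 0).card = 0›] at this
  obtain ⟨hvmem, hreq, hrmin, hHe⟩ := hpeel i hi1 hin
  have hviT : v i ∈ T := by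
    have hnot : ¬ T ⊆ H (i - 1) := Nat.find_min hex (by omega)
    rw [hHe] at hnot
    by_contra hvi
    apply hnot
    intro x hx
    exact Finset.mem_erase.mpr ⟨fun h => hvi (h ▸ hx), hiT hx⟩
  -- density chain
  have hd1 : dens w T ≤ wDeg w T (v i) :=
    wDeg_ge_dens w hsymm hnn hdiag hTne hmax hviT
  have hd2 : wDeg w T (v i) ≤ wDeg w (H i) (v i) :=
    Finset.sum_le_sum_of_subset_of_nonneg hiT (fun x _ _ => hnn _ x)
  have hd3 : (H i).card • r i ≤ ∑ u ∈ H i, wDeg w (H i) u :=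
    Finset.card_nsmul_le_sum _ _ _ hrmin
  rw [sum_wDeg] at hd3
  have hcardi : ((H i).card : ℝ) = i := by rw [hcard' i hin]
  have hipos : (0:ℝ) < i := by exact_mod_cast hi1
  refine ⟨i, hi1, hin, ?_⟩
  have hri : _root_.dens w T ≤ r i := by rw [hreq]; linarith
  have h2w : (i : ℝ) * r i ≤ 2 * wTot w (H i) := by
    rw [← hcardi]; simpa [nsmul_eq_mul] using hd3
  have hfin : r i / 2 ≤ _root_.dens w (H i) := by
    show r i / 2 ≤ wTot w (H i) / ((H i).card : ℝ)
    rw [hcardi, le_div_iff₀ hipos]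
    nlinarith
  linarith
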